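/- Let M be an invariant submanifold of a Lorentzian trans-Sasakian manifold. Then Q(g,σ) = 0 if and only if M is totally geodesic (σ = 0). -/
import Mathlib


/-- For an invariant submanifold M of a Lorentzian trans-Sasakian manifold,
Q(g,σ) = 0 if and only if M is totally geodesic (σ = 0). -/
theorem stmt9
    {C T N : Type*} [CommRing C] [AddCommGroup T] [Module C T]
    [AddCommGroup N] [Module C N]
    (σ : T →ₗ[C] T →ₗ[C] N) (g : T →ₗ[C] T →ₗ[C] C) (φ : T →ₗ[C] T)
    (ξ : T) (η : T →ₗ[C] C)
    (hηξ : η ξ = -1)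
    (hη : ∀ X, η X = g X ξ)
    (hgsymm : ∀ X Y, g X Y = g Y X)
    (hσξ : ∀ X, σ X ξ = 0) :
    -- Q(g,σ) = 0 ↔ M totally geodesic
    (∀ U V X Y,
        -(σ (g Y U • X - g X U • Y) V) - σ U (g Y V • X - g X V • Y) = 0)
      ↔ (∀ X Y, σ X Y = 0) := by
  constructor
  · intro h X Y
    have h1 := h X ξ Y ξ
    simp only [map_sub, map_smul, hσξ, ← hη, hηξ, neg_smul, one_smul, smul_zero,
      sub_zero, zero_sub, neg_neg, neg_eq_zero] at h1
    simpa [hσξ] using h1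
  · intro h U V X Y
    simp [h]
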